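/- Let G ∈ G* be 2-connected, let C be a longest odd cycle in G with |C| ≥ 5. Then C has no chords, i.e., the induced subgraph G[V(C)] is exactly the cycle C. -/

import Mathlib

open SimpleGraph

/-- Adjacency in the line graph `L(G)`: two distinct edges sharing an endpoint. -/
def lineAdj {V : Type*} (G : SimpleGraph V) (e f : G.edgeSet) : Prop :=
  e ≠ f ∧ ∃ x : V, x ∈ (e : Sym2 V) ∧ x ∈ (f : Sym2 V)

/-- `D` is an orientation of the (loopless) adjacency relation `Adj`:
every arc of `D` is an edge, and every edge gets at least one of its two arcs. -/
def IsOrientation {α : Type*} (Adj : α → α → Prop) (D : α → α → Prop) : Prop :=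
  (∀ a b, D a b → Adj a b) ∧ (∀ a b, Adj a b → D a b ∨ D b a)

/-- A digraph (relation) is kernel-perfect if every induced subdigraph has a kernel:
an independent set `S` such that every vertex outside `S` has an out-neighbor in `S`. -/
def KernelPerfect {α : Type*} (D : α → α → Prop) : Prop :=
  ∀ Z : Set α, ∃ S ⊆ Z, (∀ a ∈ S, ∀ b ∈ S, ¬ D a b) ∧
    ∀ z ∈ Z, z ∉ S → ∃ s ∈ S, D z s

/-- Out-degree of a vertex in a digraph given as a relation. -/
noncomputable def outDeg {α : Type*} (D : α → α → Prop) (a : α) : ℕ := {b | D a b}.ncard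

/-- Degree of a vertex. -/
noncomputable def deg {V : Type*} (G : SimpleGraph V) (v : V) : ℕ := (G.neighborSet v).ncard

/-- Maximum degree. -/
noncomputable def maxDeg {V : Type*} (G : SimpleGraph V) : ℕ := sSup (Set.range (deg G))

/-- `G` is `f`-edge-orientable: `L(G)` admits a kernel-perfect orientation with
`1 + d⁺(e) ≤ f e` for every edge `e`. -/
def EdgeOrientable {V : Type*} (G : SimpleGraph V) (f : G.edgeSet → ℕ) : Prop :=
  ∃ D : G.edgeSet → G.edgeSet → Prop,
    IsOrientation (lineAdj G) D ∧ KernelPerfect D ∧ ∀ e, outDeg D e + 1 ≤ f e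

open Classical in
/-- The function `f_{k,v}`: `deg v` on edges incident to `v`, and `k` elsewhere. -/
noncomputable def fkv {V : Type*} (G : SimpleGraph V) (k : ℕ) (v : V) (e : G.edgeSet) : ℕ :=
  if v ∈ (e : Sym2 V) then deg G v else k

/-- `G` is strongly `k`-edge-orientable. -/
def StronglyEdgeOrientable {V : Type*} (G : SimpleGraph V) (k : ℕ) : Prop :=
  ∀ v : V, EdgeOrientable G (fkv G k v)

/-- `G` is `f`-edge-choosable. -/
def FEdgeChoosable {V : Type*} (G : SimpleGraph V) (f : G.edgeSet → ℕ) : Prop :=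
  ∀ ℓ : G.edgeSet → Finset ℕ, (∀ e, f e ≤ (ℓ e).card) →
    ∃ φ : G.edgeSet → ℕ, (∀ e, φ e ∈ ℓ e) ∧
      ∀ e₁ e₂, lineAdj G e₁ e₂ → φ e₁ ≠ φ e₂

/-- `G ∈ G*`: any two distinct odd cycles share at most one edge. -/
def InGStar {V : Type*} (G : SimpleGraph V) : Prop :=
  ∀ (u w : V) (c₁ : G.Walk u u) (c₂ : G.Walk w w),
    c₁.IsCycle → c₂.IsCycle → Odd c₁.length → Odd c₂.length →
    {e | e ∈ c₁.edges} ≠ {e | e ∈ c₂.edges} →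
    ({e | e ∈ c₁.edges} ∩ {e | e ∈ c₂.edges}).ncard ≤ 1

/-- `G` is 2-connected: connected, and still connected after deleting any one vertex. -/
def TwoConn {V : Type*} (G : SimpleGraph V) : Prop :=
  G.Connected ∧ ∀ v : V, (G.induce {w | w ≠ v}).Connected

/-- A block of `G`: a maximal 2-connected subgraph. -/
def IsBlock {V : Type*} (G : SimpleGraph V) (B : G.Subgraph) : Prop :=
  TwoConn B.coe ∧ ∀ B' : G.Subgraph, TwoConn B'.coe → B ≤ B' → B = B'

/-- Vertex type of the theta graph with path lengths `l`: two hubs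
(`Sum.inl false`, `Sum.inl true`) plus the internal vertices of each path. -/
def ThetaVert (l : List ℕ) : Type := Bool ⊕ (Σ i : Fin l.length, Fin (l.get i - 1))

/-- The theta graph `Θ_{l₁,…,l_k}`: two hubs joined by internally disjoint paths,
the `i`-th of length `l i`. -/
def thetaGraph (l : List ℕ) : SimpleGraph (ThetaVert l) :=
  SimpleGraph.fromRel (fun a b =>
    match a, b with
    | Sum.inl false, Sum.inl true => 1 ∈ l
    | Sum.inl false, Sum.inr ⟨_, j⟩ => j.val = 0
    | Sum.inl true, Sum.inr ⟨i, j⟩ => j.val = l.get i - 2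
    | Sum.inr ⟨i, j⟩, Sum.inr ⟨i', j'⟩ => i.val = i'.val ∧ j'.val = j.val + 1
    | _, _ => False)

/-- `v` (outside `c`) touches `w ∈ c`: some `v,w`-path meets `c` only at `w`. -/
def Touches {V : Type*} (G : SimpleGraph V) {u : V} (c : G.Walk u u) (v w : V) : Prop :=
  w ∈ c.support ∧ ∃ p : G.Walk v w, p.IsPath ∧ ∀ x ∈ p.support, x ∈ c.support → x = w

/-
A chord `xy` of an odd cycle `C` splits `C` into two `x`–`y` paths whose lengths add up to the
odd number `|C|`, so one of them, `P`, has even length. Since `x ≠ y` that length is at least `2`,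
and `P + xy` is an odd cycle other than `C` sharing all the (at least two) edges of `P` with `C`.
-/

namespace SimpleGraph

variable {V : Type*} {G : SimpleGraph V}

lemma Walk.IsTrail.ncard_edges {a b : V} {p : G.Walk a b} (hp : p.IsTrail) :
    {e | e ∈ p.edges}.ncard = p.length := by
  classical
  rw [← p.length_edges, ← List.toFinset_card_of_nodup hp.edges_nodup, ← Set.ncard_coe_finset]
  simp

lemma Walk.IsCycle.exists_isPath_of_mem_support {u x y : V} {c : G.Walk u u} (hc : c.IsCycle)
    (hx : x ∈ c.support) (hy : y ∈ c.support) (hxy : x ≠ y) :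
    ∃ (p : G.Walk x y) (q : G.Walk y x), p.IsPath ∧ q.IsPath ∧
      p.edges ⊆ c.edges ∧ q.edges ⊆ c.edges ∧ p.length + q.length = c.length := by
  classical
  have hy' : y ∈ (c.rotate x hx).support := (c.mem_support_rotate_iff x hx).mpr hy
  have hsplit := (c.rotate x hx).take_spec hy'
  have hcyc : ((c.rotate x hx).takeUntil y hy' |>.append
      ((c.rotate x hx).dropUntil y hy')).IsCycle := by
    rw [hsplit]; exact hc.rotate hx
  have hedges := (c.rotate_edges x hx).perm.subset
  refine ⟨_, _, hcyc.isPath_of_append_left (Walk.not_nil_of_ne hxy.symm),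
    hcyc.isPath_of_append_right (Walk.not_nil_of_ne hxy),
    fun _ he => hedges (Walk.edges_takeUntil_subset_edges _ hy' he),
    fun _ he => hedges (Walk.edges_dropUntil_subset_edges _ hy' he), ?_⟩
  rw [← Walk.length_append, hsplit, Walk.length_rotate]

lemma InGStar.odd_length_of_isPath_of_chord (hG : InGStar G) {u a b : V} {c : G.Walk u u}
    (hc : c.IsCycle) (hodd : Odd c.length) {p : G.Walk a b} (hp : p.IsPath)
    (hsub : p.edges ⊆ c.edges) (hab : G.Adj a b) (hchord : s(a, b) ∉ c.edges) :
    Odd p.length := by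
  by_contra heven
  rw [Nat.not_odd_iff_even] at heven
  have hchord' : s(b, a) ∉ c.edges := Sym2.eq_swap ▸ hchord
  set c' : G.Walk b b := Walk.cons hab.symm p
  have hc' : c'.IsCycle :=
    (Walk.cons_isCycle_iff p hab.symm).mpr ⟨hp, fun h => hchord' (hsub h)⟩
  have hne : {e | e ∈ c.edges} ≠ {e | e ∈ c'.edges} := fun h =>
    hchord' (h ▸ List.mem_cons_self : s(b, a) ∈ {e | e ∈ c.edges})
  have hshared := hG u b c c' hc hc' hodd (by simpa [c'] using heven.add_one) hne
  have hlen : 2 ≤ p.length := by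
    obtain ⟨k, hk⟩ := heven
    have : p.length ≠ 0 := fun h => hab.ne (p.eq_of_length_eq_zero h)
    omega
  have hle : {e | e ∈ p.edges}.ncard ≤ ({e | e ∈ c.edges} ∩ {e | e ∈ c'.edges}).ncard :=
    Set.ncard_le_ncard (fun e he => ⟨hsub he, List.mem_cons_of_mem _ he⟩)
      (c.edges.finite_toSet.inter_of_left _)
  rw [hp.isTrail.ncard_edges] at hle
  omega

end SimpleGraph

theorem stmt6 {V : Type*} (G : SimpleGraph V) (hG : InGStar G)
    (u : V) (c : G.Walk u u) (hc : c.IsCycle) (hodd : Odd c.length) :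
    ∀ x y : V, x ∈ c.support → y ∈ c.support → G.Adj x y → s(x, y) ∈ c.edges := by
  intro x y hx hy hxy
  by_contra hchord
  obtain ⟨p, q, hp, hq, hpc, hqc, hlen⟩ := hc.exists_isPath_of_mem_support hx hy hxy.ne
  have hpodd := hG.odd_length_of_isPath_of_chord hc hodd hp hpc hxy hchord
  have hqodd := hG.odd_length_of_isPath_of_chord hc hodd hq hqc hxy.symm (Sym2.eq_swap ▸ hchord)
  rw [← hlen] at hodd
  exact Nat.not_even_iff_odd.mpr hodd (hpodd.add_odd hqodd)
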